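/- Let A = kQ/I be a string algebra over an algebraically closed field k, M(b,m,λ) and M(c,n,μ) band modules, d a string, j ∈ sub(d,(c,n)) and i ∈ fac(d,(b,m)). The morphism ι_{j,d,(c,n),μ} ∘ π_{i,d,(b,m),λ} : M(b,m,λ) → M(c,n,μ) is injective if m ≤ l(d) < n+m and m < n, and it is surjective if n ≤ l(d) < m+n and n < m. -/
import Mathlib


open scoped Classical

noncomputable section

namespace SA

variable {V Arr : Type} [Fintype V] [Fintype Arr] [DecidableEq V] [DecidableEq Arr]

/-- The data of a finite quiver on vertex set `V` and arrow set `Arr`. -/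
structure QuivData (V Arr : Type) where
  src : Arr → V
  tgt : Arr → V

/-- A letter is an arrow (`Sum.inl`) or a formal inverse arrow (`Sum.inr`). -/
abbrev Letter (Arr : Type) := Arr ⊕ Arr

/-- Inversion of letters. -/
def linv : Letter Arr → Letter Arr
  | Sum.inl a => Sum.inr a
  | Sum.inr a => Sum.inl a

/-- Source of a letter. -/
def lsrc (Q : QuivData V Arr) : Letter Arr → V
  | Sum.inl a => Q.src a
  | Sum.inr a => Q.tgt a

/-- Target of a letter. -/
def ltgt (Q : QuivData V Arr) : Letter Arr → V
  | Sum.inl a => Q.tgt a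
  | Sum.inr a => Q.src a

/-- A word in arrows and inverse arrows, written `α₁ ⋯ αₙ` as the list `[α₁, …, αₙ]`. -/
abbrev Word (Arr : Type) := List (Letter Arr)

/-- The inverse word. -/
def winv (w : Word Arr) : Word Arr := (w.map linv).reverse

/-- The `s`-th power of a word (concatenation of `s` copies). -/
def wpow (w : Word Arr) (s : ℕ) : Word Arr := (List.replicate s w).flatten

/-- Cyclic rotation of a word by `j` letters. -/
def rot (w : Word Arr) (j : ℕ) : Word Arr := w.drop j ++ w.take j

/-- A list of arrows `[α₁, …, αₙ]` is a path `α₁ ⋯ αₙ` if consecutive arrows compose. -/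
def IsPathList (Q : QuivData V Arr) (p : List Arr) : Prop :=
  p.Chain' (fun a b => Q.src a = Q.tgt b)

/-- Membership of a path in the (monomial) ideal generated by the set of paths `R`. -/
def InIdeal (R : Set (List Arr)) (p : List Arr) : Prop := ∃ q ∈ R, q.IsInfix p

/-- A word lies in the ideal iff it is a (direct) path lying in the ideal. -/
def WordInIdeal (R : Set (List Arr)) (w : Word Arr) : Prop :=
  ∃ p : List Arr, w = p.map Sum.inl ∧ InIdeal R p

/-- The string condition for a word: consecutive letters compose, no letter is followed by
its inverse, and no subword nor the inverse of a subword lies in the ideal. -/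
def IsStringWord (Q : QuivData V Arr) (R : Set (List Arr)) (w : Word Arr) : Prop :=
  w.Chain' (fun x y => lsrc Q x = ltgt Q y) ∧
  w.Chain' (fun x y => x ≠ linv y) ∧
  ∀ u : Word Arr, u.IsInfix w → ¬ WordInIdeal R u ∧ ¬ WordInIdeal R (winv u)

/-- A string, recorded as a word together with its source vertex (the vertex itself is
only constrained for the trivial strings `1ᵤ`). -/
abbrev SStr (V Arr : Type) := Word Arr × V

/-- The pair `c = (w, u)` is a string with source vertex `u`. -/
def IsStrV (Q : QuivData V Arr) (R : Set (List Arr)) (c : SStr V Arr) : Prop :=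
  IsStringWord Q R c.1 ∧ ∀ x, c.1.getLast? = some x → lsrc Q x = c.2

/-- `c = α₁⋯αₙ` starts with an arrow, i.e. `αₙ ∈ Q₁`. -/
def startsArr (w : Word Arr) : Prop := ∃ a, w.getLast? = some (Sum.inl a)

/-- `c = α₁⋯αₙ` starts with an inverse arrow. -/
def startsInv (w : Word Arr) : Prop := ∃ a, w.getLast? = some (Sum.inr a)

/-- `c = α₁⋯αₙ` ends with an arrow, i.e. `α₁ ∈ Q₁`. -/
def endsArr (w : Word Arr) : Prop := ∃ a, w.head? = some (Sum.inl a)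

/-- `c = α₁⋯αₙ` ends with an inverse arrow. -/
def endsInv (w : Word Arr) : Prop := ∃ a, w.head? = some (Sum.inr a)

/-- The word `w = b(1)⋯b(m)` (extended `m`-periodically) is a quasi-band: every
`b(i)⋯b(i+n)` is a string; equivalently every power of `w` is a string. -/
def IsQuasiBand (Q : QuivData V Arr) (R : Set (List Arr)) (w : Word Arr) : Prop :=
  w ≠ [] ∧ ∀ s : ℕ, IsStringWord Q R (wpow w (s + 1))

/-- A band: a quasi-band with no smaller period. -/
def IsBand (Q : QuivData V Arr) (R : Set (List Arr)) (w : Word Arr) : Prop :=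
  IsQuasiBand Q R w ∧ ∀ j, 0 < j → j < w.length → rot w j ≠ w

/-- Equivalence of bands: equal up to rotation, or up to rotation after inversion. -/
def BandEquiv (w w' : Word Arr) : Prop :=
  w.length = w'.length ∧ ∃ j, rot w' j = w ∨ rot (winv w') j = w

/-- The pair of bands `((b,m),(c,n))` is extendable. -/
def Extendable (Q : QuivData V Arr) (R : Set (List Arr)) (wb wc : Word Arr) : Prop :=
  ∃ (s t : ℕ) (u v w : Word Arr) (α β γ δ : Arr),
    IsStringWord Q R u ∧ IsStringWord Q R v ∧ IsStringWord Q R w ∧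
    wpow wb (s + 1) = w ++ [Sum.inl β] ++ u ++ [Sum.inr α] ∧
    wpow wc (t + 1) = w ++ [Sum.inr δ] ++ v ++ [Sum.inl γ] ∧
    IsQuasiBand Q R (wc ++ wb)

/-- A pair of equivalence classes of bands is extendable if some pair of representatives is. -/
def ExtendableCl (Q : QuivData V Arr) (R : Set (List Arr)) (wb wc : Word Arr) : Prop :=
  ∃ wb' wc', BandEquiv wb wb' ∧ BandEquiv wc wc' ∧ Extendable Q R wb' wc'

/-- A band `(b,m)` is negligible. -/
def Negligible (Q : QuivData V Arr) (R : Set (List Arr)) (wb : Word Arr) : Prop :=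
  (∃ (u v w x y : Word Arr) (α β γ δ : Arr) (s : ℕ),
    IsStringWord Q R u ∧ IsStringWord Q R v ∧ IsStringWord Q R w ∧
    IsStringWord Q R x ∧ IsStringWord Q R y ∧
    wb = u ++ [Sum.inl γ] ++ v ++ [Sum.inr α] ∧
    wpow wb (s + 1) = w ++ [Sum.inl β] ++ x ++ [Sum.inr α] ∧
    wpow wb (s + 1) = u ++ [Sum.inl γ] ++ w ++ [Sum.inr δ] ++ y ∧
    IsQuasiBand Q R (u ++ [Sum.inl γ]) ∧ IsQuasiBand Q R (v ++ [Sum.inr α])) ∨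
  (∃ u v w : Word Arr,
    IsStringWord Q R u ∧ IsStringWord Q R v ∧ IsStringWord Q R w ∧
    startsArr u ∧ endsArr u ∧ startsInv v ∧ endsInv v ∧
    wb = w ++ u ++ winv w ++ v ∧
    IsQuasiBand Q R (w ++ winv u ++ winv w ++ v))

/-- An equivalence class of bands is negligible if it contains a negligible band. -/
def NegligibleCl (Q : QuivData V Arr) (R : Set (List Arr)) (wb : Word Arr) : Prop :=
  ∃ wb', BandEquiv wb wb' ∧ Negligible Q R wb'

/-- `n` consecutive letters `b(j+1) b(j+2) ⋯ b(j+n)` of the periodic word `w`,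
with `j` a 0-based offset. -/
def cycTake (w : Word Arr) (j n : ℕ) : Word Arr := (rot w j ++ wpow w n).take n

/-- `parti₁(c,(b,m))`: positions where `c` occurs in the cyclic word. -/
def parti1 (c w : Word Arr) : Set (Fin w.length) := {j | cycTake w (j : ℕ) c.length = c}

/-- `parti(c,(b,m)) = parti₁(c,(b,m)) ∪ parti₁(c⁻¹,(b,m))`. -/
def partiSet (c w : Word Arr) : Set (Fin w.length) := parti1 c w ∪ parti1 (winv c) w

/-- `# parti(c,(b,m))`. -/
def partiCard (c w : Word Arr) : ℕ := (partiSet c w).ncard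

/-- `# parti(c,S)` for a sequence `S` of quasi-bands. -/
def partiSeqCard (c : Word Arr) (S : List (Word Arr)) : ℕ :=
  (S.map fun w => partiCard c w).sum

/-- `sub₁(d,(b,m))`: positions `j` (0-based; paper's `i = j+1`) such that
`b(i)⋯b(i+l(d)) = b(i)d` with `b(i)` an inverse arrow and `b(i+l(d)+1)` an arrow.
For a trivial string the vertex must match. -/
def subC (Q : QuivData V Arr) (d : SStr V Arr) (w : Word Arr) : Set (Fin w.length) :=
  {j | ∃ α β : Arr, cycTake w (j : ℕ) (d.1.length + 2) = Sum.inr α :: (d.1 ++ [Sum.inl β]) ∧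
      (d.1 = [] → d.2 = Q.tgt α)}

/-- `fac₁(d,(b,m))`. -/
def facC (Q : QuivData V Arr) (d : SStr V Arr) (w : Word Arr) : Set (Fin w.length) :=
  {j | ∃ α β : Arr, cycTake w (j : ℕ) (d.1.length + 2) = Sum.inl α :: (d.1 ++ [Sum.inr β]) ∧
      (d.1 = [] → d.2 = Q.src α)}

/-- `sub(d,(b,m)) = sub₁(d,(b,m)) ∪ sub₁(d⁻¹,(b,m))`. -/
def subB (Q : QuivData V Arr) (d : SStr V Arr) (w : Word Arr) : Set (Fin w.length) :=
  subC Q d w ∪ subC Q (winv d.1, d.2) w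

/-- `fac(d,(b,m)) = fac₁(d,(b,m)) ∪ fac₁(d⁻¹,(b,m))`. -/
def facB (Q : QuivData V Arr) (d : SStr V Arr) (w : Word Arr) : Set (Fin w.length) :=
  facC Q d w ∪ facC Q (winv d.1, d.2) w

def subBCard (Q : QuivData V Arr) (d : SStr V Arr) (w : Word Arr) : ℕ := (subB Q d w).ncard

def facBCard (Q : QuivData V Arr) (d : SStr V Arr) (w : Word Arr) : ℕ := (facB Q d w).ncard

/-- `# sub(d,S)` for a sequence of quasi-bands. -/
def subSeqCard (Q : QuivData V Arr) (d : SStr V Arr) (S : List (Word Arr)) : ℕ :=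
  (S.map fun w => subBCard Q d w).sum

/-- `# fac(d,S)` for a sequence of quasi-bands. -/
def facSeqCard (Q : QuivData V Arr) (d : SStr V Arr) (S : List (Word Arr)) : ℕ :=
  (S.map fun w => facBCard Q d w).sum

/-- The target vertex `t(c)` of a string. -/
def wtgt (Q : QuivData V Arr) (c : SStr V Arr) : V :=
  match c.1.head? with
  | some x => ltgt Q x
  | none => c.2

/-- `sub(d,c)`: substring triples `(c₁,c₂,c₃)` of the string `c` with `c₂ ∈ {d, d⁻¹}`. -/
def subTri (Q : QuivData V Arr) (d c : SStr V Arr) :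
    Set (Word Arr × Word Arr × Word Arr) :=
  {t | c.1 = t.1 ++ t.2.1 ++ t.2.2 ∧ (t.2.1 = d.1 ∨ t.2.1 = winv d.1) ∧
       (t.1 = [] ∨ startsInv t.1) ∧ (t.2.2 = [] ∨ endsArr t.2.2) ∧
       (d.1 = [] → d.2 = wtgt Q (t.2.2, c.2))}

/-- `fac(d,c)`: factorstring triples `(c₁,c₂,c₃)` of the string `c` with `c₂ ∈ {d, d⁻¹}`. -/
def facTri (Q : QuivData V Arr) (d c : SStr V Arr) :
    Set (Word Arr × Word Arr × Word Arr) :=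
  {t | c.1 = t.1 ++ t.2.1 ++ t.2.2 ∧ (t.2.1 = d.1 ∨ t.2.1 = winv d.1) ∧
       (t.1 = [] ∨ startsArr t.1) ∧ (t.2.2 = [] ∨ endsInv t.2.2) ∧
       (d.1 = [] → d.2 = wtgt Q (t.2.2, c.2))}

def subTriCard (Q : QuivData V Arr) (d c : SStr V Arr) : ℕ := (subTri Q d c).ncard

def facTriCard (Q : QuivData V Arr) (d c : SStr V Arr) : ℕ := (facTri Q d c).ncard

/-- All words of length at most `n`. -/
def wordsLe (Arr : Type) [Fintype Arr] [DecidableEq Arr] (n : ℕ) : Finset (Word Arr) :=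
  (Finset.range (n + 1)).biUnion fun l =>
    Finset.image (fun f : Fin l → Letter Arr => List.ofFn f) Finset.univ

/-- All strings of length at most `n`. -/
def strsLe (Q : QuivData V Arr) (R : Set (List Arr)) (n : ℕ) : Finset (SStr V Arr) :=
  ((wordsLe Arr n) ×ˢ (Finset.univ : Finset V)).filter fun d => IsStrV Q R d

/-- `[c,S] = Σ_{d string, l(d) ≤ l(c)} # fac(d,c) · # sub(d,S)`. -/
def bracketL (Q : QuivData V Arr) (R : Set (List Arr)) (c : SStr V Arr)
    (S : List (Word Arr)) : ℕ :=
  ∑ d ∈ strsLe Q R c.1.length, facTriCard Q d c * subSeqCard Q d S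

/-- `[S,c] = Σ_{d string, l(d) ≤ l(c)} # fac(d,S) · # sub(d,c)`. -/
def bracketR (Q : QuivData V Arr) (R : Set (List Arr)) (S : List (Word Arr))
    (c : SStr V Arr) : ℕ :=
  ∑ d ∈ strsLe Q R c.1.length, facSeqCard Q d S * subTriCard Q d c

/-! ### The module variety `mod(A,d)` -/

/-- Generators of the algebra `A = kQ/I`: the vertices (idempotents) and the arrows. -/
abbrev Gen (V Arr : Type) := V ⊕ Arr

/-- A prospective point of `mod(A,d)`: matrices assigned to the generators. -/
abbrev ModPt (k : Type) (V Arr : Type) (d : ℕ) := Gen V Arr → Matrix (Fin d) (Fin d) k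

variable {k : Type} [Field k]

/-- The product of the matrices along a path. -/
def relProd {d : ℕ} (X : ModPt k V Arr d) (p : List Arr) : Matrix (Fin d) (Fin d) k :=
  (p.map fun a => X (Sum.inr a)).prod

/-- `X` is a point of `mod(A,d)`, i.e. determines a `k`-algebra homomorphism
`kQ/I → M_d(k)`. -/
def IsModPt (Q : QuivData V Arr) (R : Set (List Arr)) {d : ℕ} (X : ModPt k V Arr d) : Prop :=
  (∀ u : V, X (Sum.inl u) * X (Sum.inl u) = X (Sum.inl u)) ∧
  (∀ u v : V, u ≠ v → X (Sum.inl u) * X (Sum.inl v) = 0) ∧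
  (∑ u : V, X (Sum.inl u)) = 1 ∧
  (∀ a : Arr, X (Sum.inl (Q.tgt a)) * X (Sum.inr a) * X (Sum.inl (Q.src a)) = X (Sum.inr a)) ∧
  (∀ p ∈ R, relProd X p = 0)

/-- The affine variety `mod(A,d)` of `d`-dimensional modules. -/
def modVar (k : Type) [Field k] (Q : QuivData V Arr) (R : Set (List Arr)) (d : ℕ) :
    Set (ModPt k V Arr d) :=
  {X | IsModPt Q R X}

/-- The vertex of the `i`-th basis vector `e_{c'}` (`c'` the left divisor of length `i`)
of the string module `M(c)`. -/
def strV (Q : QuivData V Arr) (c : SStr V Arr) (i : Fin (c.1.length + 1)) : V :=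
  if h : (i : ℕ) < c.1.length then ltgt Q (c.1.get ⟨i, h⟩) else c.2

/-- The string module `M(c)` as a point of `mod(A, l(c)+1)`. -/
def strPt (k : Type) [Field k] (Q : QuivData V Arr) (c : SStr V Arr) :
    ModPt k V Arr (c.1.length + 1) := fun g =>
  match g with
  | Sum.inl v => Matrix.diagonal fun i => if strV Q c i = v then (1 : k) else 0
  | Sum.inr a => fun i j =>
      (if (j : ℕ) = (i : ℕ) + 1 ∧ c.1[(i : ℕ)]? = some (Sum.inl a) then (1 : k) else 0) +
      (if (i : ℕ) = (j : ℕ) + 1 ∧ c.1[(j : ℕ)]? = some (Sum.inr a) then (1 : k) else 0)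

/-- The band module `M(b,m,λ)` as a point of `mod(A,m)`; here `w = b(1)⋯b(m)` and the
`j`-th basis vector is the class of `e_{j+1}`. -/
def bandPt (k : Type) [Field k] (Q : QuivData V Arr) (w : Word Arr) (lam : k) :
    ModPt k V Arr w.length := fun g =>
  match g with
  | Sum.inl v => Matrix.diagonal fun i => if lsrc Q (w.get i) = v then (1 : k) else 0
  | Sum.inr a => fun i j =>
      (if w.get j = Sum.inl a ∧ (j : ℕ) = ((i : ℕ) + 1) % w.length then
        (if (j : ℕ) = 0 then lam else 1) else 0) +
      (if w.get i = Sum.inr a ∧ (i : ℕ) = ((j : ℕ) + 1) % w.length then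
        (if (i : ℕ) = 0 then lam⁻¹ else 1) else 0)

/-- The `S`-family `F(S) ⊆ mod(A,d)` of the sequence of (quasi-)bands `S`:
all conjugates of direct sums `M(b₁,λ₁) ⊕ ⋯ ⊕ M(bₙ,λₙ)` with all `λᵢ ∈ k^*`. -/
def famSet (k : Type) [Field k] (Q : QuivData V Arr) (S : List (Word Arr)) (d : ℕ) :
    Set (ModPt k V Arr d) :=
  {X | ∃ (lam : Fin S.length → k), (∀ i, lam i ≠ 0) ∧
    ∃ (g : (Matrix (Fin d) (Fin d) k)ˣ)
      (e : (Σ i : Fin S.length, Fin (S.get i).length) ≃ Fin d),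
      X = fun a => (g : Matrix (Fin d) (Fin d) k) *
        (Matrix.reindex e e (Matrix.blockDiagonal' fun i => bandPt k Q (S.get i) (lam i) a)) *
        ((g⁻¹ : (Matrix (Fin d) (Fin d) k)ˣ) : Matrix (Fin d) (Fin d) k)}

/-! ### Zariski topology on the ambient affine space -/

/-- Evaluation of a polynomial in the matrix entries at a point. -/
def evalPt {d : ℕ} (X : ModPt k V Arr d) (p : MvPolynomial (Gen V Arr × Fin d × Fin d) k) : k :=
  MvPolynomial.eval (fun q => X q.1 q.2.1 q.2.2) p

/-- The Zariski closure of a subset of the ambient affine space. -/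
def zcl {d : ℕ} (s : Set (ModPt k V Arr d)) : Set (ModPt k V Arr d) :=
  {X | ∀ p : MvPolynomial (Gen V Arr × Fin d × Fin d) k,
    (∀ Y ∈ s, evalPt Y p = 0) → evalPt X p = 0}

/-- Zariski closed subsets. -/
def IsZClosed {d : ℕ} (s : Set (ModPt k V Arr d)) : Prop := zcl s = s

/-- Irreducible (nonempty) Zariski closed subsets. -/
def IsIrrClosed {d : ℕ} (s : Set (ModPt k V Arr d)) : Prop :=
  IsZClosed s ∧ s.Nonempty ∧
  ∀ t u : Set (ModPt k V Arr d), IsZClosed t → IsZClosed u → s ⊆ t ∪ u → s ⊆ t ∨ s ⊆ u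

/-- `s` is an irreducible component of `Xv`: a maximal irreducible closed subset of `Xv`. -/
def IsIrrComp {d : ℕ} (Xv s : Set (ModPt k V Arr d)) : Prop :=
  IsIrrClosed s ∧ s ⊆ Xv ∧ ∀ t : Set (ModPt k V Arr d), IsIrrClosed t → t ⊆ Xv → s ⊆ t → s = t

/-- The (Krull) dimension of a subset of the ambient space: the Krull dimension of its
poset of irreducible closed subsets. -/
def zdim {d : ℕ} (s : Set (ModPt k V Arr d)) : WithBot ℕ∞ :=
  Order.krullDim {t : Set (ModPt k V Arr d) // IsIrrClosed t ∧ t ⊆ s}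

/-! ### Homomorphisms, exact sequences and Ext -/

/-- `f` is a homomorphism of representations `X → Y`. -/
def IsHomPt {d1 d2 : ℕ} (X : ModPt k V Arr d1) (Y : ModPt k V Arr d2)
    (f : Matrix (Fin d2) (Fin d1) k) : Prop :=
  ∀ g : Gen V Arr, f * X g = Y g * f

/-- The space `Hom_A(X,Y)` of homomorphisms of representations. -/
def homSet {d1 d2 : ℕ} (X : ModPt k V Arr d1) (Y : ModPt k V Arr d2) :
    Submodule k (Matrix (Fin d2) (Fin d1) k) where
  carrier := {f | IsHomPt X Y f}
  add_mem' := by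
    intro f g hf hg a
    rw [Matrix.add_mul, Matrix.mul_add, hf a, hg a]
  zero_mem' := by
    intro a
    rw [Matrix.zero_mul, Matrix.mul_zero]
  smul_mem' := by
    intro c f hf a
    rw [Matrix.smul_mul, Matrix.mul_smul, hf a]

/-- `dim_k Hom_A(X,Y)`. -/
def homDim {d1 d2 : ℕ} (X : ModPt k V Arr d1) (Y : ModPt k V Arr d2) : ℕ :=
  Module.finrank k (homSet X Y)

/-- `0 → A → B → C → 0` is a short exact sequence of representations. -/
def SES {dA dB dC : ℕ} (A : ModPt k V Arr dA) (B : ModPt k V Arr dB) (C : ModPt k V Arr dC)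
    (f : Matrix (Fin dB) (Fin dA) k) (g : Matrix (Fin dC) (Fin dB) k) : Prop :=
  IsHomPt A B f ∧ IsHomPt B C g ∧ Function.Injective f.mulVecLin ∧
  Function.Surjective g.mulVecLin ∧ LinearMap.range f.mulVecLin = LinearMap.ker g.mulVecLin

/-- The epimorphism `g : B → C` splits by a homomorphism of representations. -/
def SplitSES {dB dC : ℕ} (B : ModPt k V Arr dB) (C : ModPt k V Arr dC)
    (g : Matrix (Fin dC) (Fin dB) k) : Prop :=
  ∃ h : Matrix (Fin dB) (Fin dC) k, IsHomPt C B h ∧ g * h = 1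

/-- `Ext¹_A(X,Y) = 0`: every short exact sequence `0 → Y → Z → X → 0` of `A`-modules splits. -/
def Ext1Zero (Q : QuivData V Arr) (R : Set (List Arr)) {d1 d2 : ℕ}
    (X : ModPt k V Arr d1) (Y : ModPt k V Arr d2) : Prop :=
  ∀ (dz : ℕ) (Z : ModPt k V Arr dz) (f : Matrix (Fin dz) (Fin d2) k)
    (g : Matrix (Fin d1) (Fin dz) k),
    IsModPt Q R Z → SES Y Z X f g → SplitSES Z X g

/-- The two representations are isomorphic. -/
def ModIsoPt {d1 d2 : ℕ} (X : ModPt k V Arr d1) (Y : ModPt k V Arr d2) : Prop :=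
  ∃ g : Matrix (Fin d2) (Fin d1) k, IsHomPt X Y g ∧ Function.Bijective g.mulVecLin

/-- `X ∈ mod(A,d)` is regular: `Σ_α rank X(α) = d`. -/
def IsRegularPt {d : ℕ} (X : ModPt k V Arr d) : Prop :=
  (∑ a : Arr, (X (Sum.inr a)).rank) = d

/-! ### Explicit morphism matrices -/

/-- The substring morphism `M(c₂) → M(c)` for a substring triple with `l(c₁) = off`:
`e_r ↦ e_{off+r}`. -/
def subMapS (k : Type) [Field k] (off l L : ℕ) : Matrix (Fin (L + 1)) (Fin (l + 1)) k :=
  fun p r => if (p : ℕ) = off + (r : ℕ) then 1 else 0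

/-- The factorstring morphism `M(c) → M(c₂)` for a factorstring triple with `l(c₁) = off`:
`e_{off+r} ↦ e_r`, other basis vectors to `0`. -/
def facMapS (k : Type) [Field k] (off l L : ℕ) : Matrix (Fin (l + 1)) (Fin (L + 1)) k :=
  fun r p => if (p : ℕ) = off + (r : ℕ) then 1 else 0

/-- The canonical isomorphism `M(c) → M(c⁻¹)`, `e_r ↦ e_{l-r}`. -/
def revMat (k : Type) [Field k] (l : ℕ) : Matrix (Fin (l + 1)) (Fin (l + 1)) k :=
  fun p q => if (p : ℕ) + (q : ℕ) = l then 1 else 0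

/-- The factorstring morphism `M(b,m,λ) → M(d)` (unwinding followed by the window
projection at 0-based position `j`). -/
def facMapB (k : Type) [Field k] (j l m : ℕ) (lam : k) : Matrix (Fin (l + 1)) (Fin m) k :=
  fun r t => if (t : ℕ) = (j + (r : ℕ)) % m then lam ^ ((j + (r : ℕ)) / m) else 0

/-- The substring morphism `M(d) → M(c,n,μ)` (window embedding at 0-based position `j`
followed by winding). -/
def subMapB (k : Type) [Field k] (j l n : ℕ) (mu : k) : Matrix (Fin n) (Fin (l + 1)) k :=
  fun q r => if (q : ℕ) = (j + (r : ℕ)) % n then mu⁻¹ ^ ((j + (r : ℕ)) / n) else 0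

/-- The factorstring morphism `π_{i,d,(b,m),λ} : M(b,m,λ) → M(d)` for `i ∈ fac(d,(b,m))`,
with the identification `M(d) ≅ M(d⁻¹)` in the inverse-orientation case. -/
def piBand (k : Type) [Field k] (Q : QuivData V Arr) (d : SStr V Arr) (wb : Word Arr)
    (lam : k) (i : Fin wb.length) : Matrix (Fin (d.1.length + 1)) (Fin wb.length) k :=
  if i ∈ facC Q d wb then facMapB k (i : ℕ) d.1.length wb.length lam
  else revMat k d.1.length * facMapB k (i : ℕ) d.1.length wb.length lam

/-- The substring morphism `ι_{j,d,(c,n),μ} : M(d) → M(c,n,μ)` for `j ∈ sub(d,(c,n))`,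
with the identification `M(d) ≅ M(d⁻¹)` in the inverse-orientation case. -/
def iotaBand (k : Type) [Field k] (Q : QuivData V Arr) (d : SStr V Arr) (wc : Word Arr)
    (mu : k) (j : Fin wc.length) : Matrix (Fin wc.length) (Fin (d.1.length + 1)) k :=
  if j ∈ subC Q d wc then subMapB k (j : ℕ) d.1.length wc.length mu
  else subMapB k (j : ℕ) d.1.length wc.length mu * revMat k d.1.length

/-- The substring morphism `ι_{d,x} : M(d) → M(c)` for a substring triple `x ∈ sub(d,c)`. -/
def iotaStr (k : Type) [Field k] (d c : SStr V Arr) (x : Word Arr × Word Arr × Word Arr) :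
    Matrix (Fin (c.1.length + 1)) (Fin (d.1.length + 1)) k :=
  if x.2.1 = d.1 then subMapS k x.1.length d.1.length c.1.length
  else subMapS k x.1.length d.1.length c.1.length * revMat k d.1.length

/-- The factorstring morphism `π_{d,x} : M(c) → M(d)` for a factorstring triple
`x ∈ fac(d,c)`. -/
def piStr (k : Type) [Field k] (d c : SStr V Arr) (x : Word Arr × Word Arr × Word Arr) :
    Matrix (Fin (d.1.length + 1)) (Fin (c.1.length + 1)) k :=
  if x.2.1 = d.1 then facMapS k x.1.length d.1.length c.1.length
  else revMat k d.1.length * facMapS k x.1.length d.1.length c.1.length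

/-- Index type for the basis of `Hom_A(M(b,m,λ), M(c))`. -/
def Idx7 (Q : QuivData V Arr) (R : Set (List Arr)) (c : SStr V Arr) (wb : Word Arr) :=
  Σ d : {d : SStr V Arr // IsStrV Q R d ∧ d.1.length ≤ c.1.length},
    (↥(subTri Q d.1 c) × ↥(facB Q d.1 wb))

/-- Index type for the basis of `Hom_A(M(c), M(b,m,λ))`. -/
def Idx8 (Q : QuivData V Arr) (R : Set (List Arr)) (c : SStr V Arr) (wb : Word Arr) :=
  Σ d : {d : SStr V Arr // IsStrV Q R d ∧ d.1.length ≤ c.1.length},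
    (↥(facTri Q d.1 c) × ↥(subB Q d.1 wb))

/-- Index type for the non-isomorphism part of the basis of
`Hom_A(M(b,m,λ), M(c,n,μ))`. -/
def Idx9 (Q : QuivData V Arr) (R : Set (List Arr)) (wb wc : Word Arr) :=
  Σ d : {d : SStr V Arr // IsStrV Q R d}, (↥(subB Q d.1 wc) × ↥(facB Q d.1 wb))

/-! ### String algebras -/

/-- `A = kQ/I` is a string algebra, where `I` is the ideal generated by the set of
paths `R`. -/
structure IsStringAlgebra (Q : QuivData V Arr) (R : Set (List Arr)) : Prop where
  rel_path : ∀ p ∈ R, IsPathList Q p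
  rel_len : ∀ p ∈ R, 2 ≤ p.length
  admissible : ∃ n : ℕ, ∀ p : List Arr, IsPathList Q p → n ≤ p.length → InIdeal R p
  src_le_two : ∀ u : V, ({a : Arr | Q.src a = u}).ncard ≤ 2
  tgt_le_two : ∀ u : V, ({a : Arr | Q.tgt a = u}).ncard ≤ 2
  str_right : ∀ a : Arr, ({b : Arr | Q.src a = Q.tgt b ∧ ¬ InIdeal R [a, b]}).ncard ≤ 1
  str_left : ∀ b : Arr, ({a : Arr | Q.src a = Q.tgt b ∧ ¬ InIdeal R [a, b]}).ncard ≤ 1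

/-- The vertex `u` is gentle with respect to the relations `R`. -/
def GentleVtx (Q : QuivData V Arr) (R : Set (List Arr)) (u : V) : Prop :=
  (∀ a : Arr, Q.src a = u → ({b : Arr | Q.src a = Q.tgt b ∧ InIdeal R [a, b]}).ncard ≤ 1) ∧
  (∀ b : Arr, Q.tgt b = u → ({a : Arr | Q.src a = Q.tgt b ∧ InIdeal R [a, b]}).ncard ≤ 1)


/-! ### Auxiliary lemmas for Statement 10 -/

open Matrix

private lemma zero_iff_of_unit {e : ℕ} {a x : k} (ha : a ≠ 0) : a ^ e * x = 0 ↔ x = 0 := by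
  rw [mul_eq_zero]
  simp [pow_ne_zero e ha]

private lemma mod_eq_cases {a b n : ℕ} (hn : 0 < n) (h : a % n = b % n)
    (ha : a < 2 * n) (hb : b < 2 * n) : a = b ∨ a = b + n ∨ b = a + n := by
  rcases Nat.lt_or_ge a n with h1 | h1 <;> rcases Nat.lt_or_ge b n with h2 | h2
  · left; rwa [Nat.mod_eq_of_lt h1, Nat.mod_eq_of_lt h2] at h
  · right; right
    have hb' : b % n = b - n := by
      rw [Nat.mod_eq_sub_mod h2, Nat.mod_eq_of_lt (by omega)]
    rw [Nat.mod_eq_of_lt h1, hb'] at h; omega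
  · right; left
    have ha' : a % n = a - n := by
      rw [Nat.mod_eq_sub_mod h1, Nat.mod_eq_of_lt (by omega)]
    rw [ha', Nat.mod_eq_of_lt h2] at h; omega
  · left
    have ha' : a % n = a - n := by
      rw [Nat.mod_eq_sub_mod h1, Nat.mod_eq_of_lt (by omega)]
    have hb' : b % n = b - n := by
      rw [Nat.mod_eq_sub_mod h2, Nat.mod_eq_of_lt (by omega)]
    rw [ha', hb'] at h; omega

private lemma subMapB_kernel_single {l n j : ℕ} (hn : 0 < n) (hl2n : l < 2 * n)
    {mu : k} (hmu : mu ≠ 0) (u : Fin (l + 1) → k)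
    (h : (subMapB k j l n mu).mulVec u = 0)
    (r : ℕ) (hr : r ≤ l) (hrl : l < r + n) (hrn : r < n) : u ⟨r, by omega⟩ = 0 := by
  have h0 := congrFun h ⟨(j + r) % n, Nat.mod_lt _ hn⟩
  simp only [Matrix.mulVec, dotProduct, subMapB, Pi.zero_apply, Fin.val_mk] at h0
  rw [Finset.sum_eq_single (⟨r, by omega⟩ : Fin (l + 1))] at h0
  · rw [if_pos rfl] at h0
    exact (zero_iff_of_unit (inv_ne_zero hmu)).mp h0
  · intro b _ hb
    rcases eq_or_ne ((j + r) % n) ((j + (b : ℕ)) % n) with hc | hc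
    · exfalso
      have hbb : (b : ℕ) % n = r % n := Nat.ModEq.add_left_cancel' j hc.symm
      have hbl : (b : ℕ) < l + 1 := b.isLt
      rcases mod_eq_cases hn hbb (by omega) (by omega) with h1 | h1 | h1
      · exact hb (Fin.ext h1)
      · omega
      · omega
    · rw [if_neg hc, zero_mul]
  · intro habs; exact absurd (Finset.mem_univ _) habs

private lemma subMapB_kernel_pair {l n j : ℕ} (hn : 0 < n) (hl2n : l < 2 * n)
    {mu : k} (hmu : mu ≠ 0) (u : Fin (l + 1) → k)
    (h : (subMapB k j l n mu).mulVec u = 0)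
    (r : ℕ) (hr : r + n ≤ l) :
    (u ⟨r, by omega⟩ = 0 ↔ u ⟨r + n, by omega⟩ = 0) := by
  have hrn : r < n := by omega
  have h0 := congrFun h ⟨(j + r) % n, Nat.mod_lt _ hn⟩
  simp only [Matrix.mulVec, dotProduct, subMapB, Pi.zero_apply, Fin.val_mk] at h0
  have hne : (⟨r, by omega⟩ : Fin (l + 1)) ≠ ⟨r + n, by omega⟩ :=
    Fin.ne_of_val_ne (by simp only [Fin.val_mk]; omega)
  have hsub : ∑ x : Fin (l + 1),
      (if (j + r) % n = (j + (x : ℕ)) % n then mu⁻¹ ^ ((j + (x : ℕ)) / n) else 0) * u x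
      = ∑ x ∈ ({⟨r, by omega⟩, ⟨r + n, by omega⟩} : Finset (Fin (l + 1))),
        (if (j + r) % n = (j + (x : ℕ)) % n then mu⁻¹ ^ ((j + (x : ℕ)) / n) else 0) * u x := by
    refine (Finset.sum_subset (Finset.subset_univ _) ?_).symm
    intro b _ hb
    simp only [Finset.mem_insert, Finset.mem_singleton] at hb
    push_neg at hb
    rcases eq_or_ne ((j + r) % n) ((j + (b : ℕ)) % n) with hc | hc
    · exfalso
      have hbb : (b : ℕ) % n = r % n := Nat.ModEq.add_left_cancel' j hc.symm
      have hbl : (b : ℕ) < l + 1 := b.isLt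
      rcases mod_eq_cases hn hbb (by omega) (by omega) with h1 | h1 | h1
      · exact hb.1 (Fin.ext h1)
      · exact hb.2 (Fin.ext h1)
      · omega
    · rw [if_neg hc, zero_mul]
  rw [hsub, Finset.sum_pair hne] at h0
  simp only [Fin.val_mk] at h0
  have hc2 : (j + r) % n = (j + (r + n)) % n := by
    rw [← Nat.add_assoc, Nat.add_mod_right]
  have hdiv : (j + (r + n)) / n = (j + r) / n + 1 := by
    rw [← Nat.add_assoc]
    exact Nat.add_div_right _ hn
  rw [if_pos trivial, if_pos hc2, hdiv, pow_succ] at h0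
  have hkey : u ⟨r, by omega⟩ + mu⁻¹ * u ⟨r + n, by omega⟩ = 0 := by
    have ha : (mu⁻¹ : k) ^ ((j + r) / n) ≠ 0 := pow_ne_zero _ (inv_ne_zero hmu)
    have h1 : mu⁻¹ ^ ((j + r) / n) *
        (u ⟨r, by omega⟩ + mu⁻¹ * u ⟨r + n, by omega⟩) = 0 := by
      rw [mul_add, ← mul_assoc]
      exact h0
    exact (mul_eq_zero.mp h1).resolve_left ha
  constructor
  · intro hx
    have hy : mu⁻¹ * u ⟨r + n, by omega⟩ = 0 := by rwa [hx, zero_add] at hkey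
    exact (mul_eq_zero.mp hy).resolve_left (inv_ne_zero hmu)
  · intro hx
    rwa [hx, mul_zero, add_zero] at hkey

private lemma facMapB_mulVec' {l m i : ℕ} (hm : 0 < m) (lam : k) (v : Fin m → k)
    (t : ℕ) (ht : t ≤ l) :
    (facMapB k i l m lam).mulVec v ⟨t, by omega⟩ =
      lam ^ ((i + t) / m) * v ⟨(i + t) % m, Nat.mod_lt _ hm⟩ := by
  simp only [Matrix.mulVec, dotProduct, facMapB, Fin.val_mk]
  rw [Finset.sum_eq_single (⟨(i + t) % m, Nat.mod_lt _ hm⟩ : Fin m)]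
  · rw [if_pos rfl]
  · intro b _ hb
    rcases eq_or_ne ((b : ℕ)) ((i + t) % m) with hc | hc
    · exact absurd (Fin.ext hc) hb
    · rw [if_neg hc, zero_mul]
  · intro habs; exact absurd (Finset.mem_univ _) habs

private lemma revMat_mulVec {l : ℕ} (w : Fin (l + 1) → k) (t : ℕ) (ht : t ≤ l) :
    (revMat k l).mulVec w ⟨t, by omega⟩ = w ⟨l - t, by omega⟩ := by
  simp only [Matrix.mulVec, dotProduct, revMat, Fin.val_mk]
  rw [Finset.sum_eq_single (⟨l - t, by omega⟩ : Fin (l + 1))]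
  · rw [if_pos (by simp only [Fin.val_mk]; omega), one_mul]
  · intro b _ hb
    rcases eq_or_ne (t + (b : ℕ)) l with hc | hc
    · exact absurd (Fin.ext (by simp only [Fin.val_mk]; omega)) hb
    · rw [if_neg hc, zero_mul]
  · intro habs; exact absurd (Finset.mem_univ _) habs

private lemma revFacMapB_mulVec' {l m i : ℕ} (hm : 0 < m) (lam : k) (v : Fin m → k)
    (t : ℕ) (ht : t ≤ l) :
    (revMat k l * facMapB k i l m lam).mulVec v ⟨t, by omega⟩ =
      lam ^ ((i + (l - t)) / m) * v ⟨(i + (l - t)) % m, Nat.mod_lt _ hm⟩ := by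
  rw [← Matrix.mulVec_mulVec, revMat_mulVec _ t ht, facMapB_mulVec' hm lam v (l - t) (by omega)]

private lemma core_z {m n i l : ℕ} (hm : 0 < m) (hml : m ≤ l) (hln : l < n + m)
    (hmn : m < n) (z : ℕ → k) (hzper : ∀ a, z (a + m) = z a)
    (H1 : ∀ t, t ≤ l → l < t + n → t < n → z (i + t) = 0)
    (H2 : ∀ t, t + n ≤ l → (z (i + t) = 0 ↔ z (i + (t + n)) = 0)) :
    ∀ t, t ≤ l → t < n → z (i + t) = 0 := by
  have key : ∀ c t, t ≤ l → t < n → n ≤ t + c → z (i + t) = 0 := by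
    intro c
    induction c with
    | zero => intro t _ h2 h3; exact absurd h2 (by omega)
    | succ c ih =>
      intro t h1 h2 h3
      by_cases hc : l < t + n
      · exact H1 t h1 hc h2
      · push_neg at hc
        refine (H2 t hc).mpr ?_
        have he : i + (t + n) = i + (t + n - m) + m := by omega
        rw [he, hzper]
        exact ih (t + n - m) (by omega) (by omega) (by omega)
  intro t h1 h2
  exact key n t h1 h2 (by omega)

private lemma core_inj (l m n i j : ℕ) (hm : 0 < m) (hml : m ≤ l) (hln : l < n + m)
    (hmn : m < n) (lam mu : k) (hlam : lam ≠ 0) (hmu : mu ≠ 0)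
    (F : Matrix (Fin (l + 1)) (Fin m) k)
    (hF : F = facMapB k i l m lam ∨ F = revMat k l * facMapB k i l m lam)
    (v : Fin m → k) (hv : (subMapB k j l n mu * F).mulVec v = 0) : v = 0 := by
  have hn : 0 < n := by omega
  have hl2n : l < 2 * n := by omega
  have hu : (subMapB k j l n mu).mulVec (F.mulVec v) = 0 := by
    rw [Matrix.mulVec_mulVec]; exact hv
  have hz0 : ∀ t, t ≤ l → t < n → v ⟨(i + t) % m, Nat.mod_lt _ hm⟩ = 0 := by
    refine core_z hm hml hln hmn (fun s => v ⟨s % m, Nat.mod_lt _ hm⟩)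
      (fun a => congrArg v (Fin.ext (Nat.add_mod_right a m))) ?_ ?_
    · -- H1
      intro t h1 h2 h3
      rcases hF with hF | hF
      · have h0 := subMapB_kernel_single hn hl2n hmu (F.mulVec v) hu t h1 h2 h3
        rw [hF, facMapB_mulVec' hm lam v t h1] at h0
        exact (zero_iff_of_unit hlam).mp h0
      · have h0 := subMapB_kernel_single hn hl2n hmu (F.mulVec v) hu (l - t)
          (by omega) (by omega) (by omega)
        rw [hF, revFacMapB_mulVec' hm lam v (l - t) (by omega)] at h0
        rw [show l - (l - t) = t by omega] at h0
        exact (zero_iff_of_unit hlam).mp h0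
    · -- H2
      intro t h1
      rcases hF with hF | hF
      · have hp := subMapB_kernel_pair hn hl2n hmu (F.mulVec v) hu t h1
        rw [hF, facMapB_mulVec' hm lam v t (by omega),
          facMapB_mulVec' hm lam v (t + n) (by omega)] at hp
        exact ((zero_iff_of_unit hlam).symm.trans hp).trans (zero_iff_of_unit hlam)
      · have hp := subMapB_kernel_pair hn hl2n hmu (F.mulVec v) hu (l - (t + n)) (by omega)
        rw [hF, revFacMapB_mulVec' hm lam v (l - (t + n)) (by omega),
          revFacMapB_mulVec' hm lam v (l - (t + n) + n) (by omega)] at hp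
        rw [show l - (l - (t + n)) = t + n by omega,
          show l - (l - (t + n) + n) = t by omega] at hp
        exact ((zero_iff_of_unit hlam).symm.trans hp.symm).trans (zero_iff_of_unit hlam)
  funext x
  have hxm : (x : ℕ) < m := x.isLt
  have him : i % m < m := Nat.mod_lt _ hm
  set r : ℕ := ((x : ℕ) + m - i % m) % m with hrdef
  have hrm : r < m := Nat.mod_lt _ hm
  have hmod : (i + r) % m = (x : ℕ) := by
    have h2 : (i + r) % m = (i + ((x : ℕ) + m - i % m)) % m :=
      Nat.ModEq.add_left i (Nat.mod_modEq _ m)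
    have h4 : i + ((x : ℕ) + m - i % m) = m * (i / m) + ((x : ℕ) + m) := by
      have := Nat.div_add_mod i m; omega
    rw [h2, h4, Nat.mul_add_mod, Nat.add_mod_right, Nat.mod_eq_of_lt hxm]
  have hz := hz0 r (by omega) (by omega)
  have hfin : (⟨(i + r) % m, Nat.mod_lt _ hm⟩ : Fin m) = x := Fin.ext hmod
  rw [hfin] at hz
  exact hz

private lemma subMapB_transpose {l n j : ℕ} (mu : k) :
    (subMapB k j l n mu)ᵀ = facMapB k j l n mu⁻¹ := by
  ext r q
  simp [subMapB, facMapB, Matrix.transpose_apply]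

private lemma facMapB_transpose {l m i : ℕ} (lam : k) :
    (facMapB k i l m lam)ᵀ = subMapB k i l m lam⁻¹ := by
  ext t r
  simp [subMapB, facMapB, Matrix.transpose_apply, inv_inv]

private lemma revMat_transpose {l : ℕ} : (revMat k l)ᵀ = revMat k l := by
  ext p q
  simp only [revMat, Matrix.transpose_apply]
  rw [Nat.add_comm (q : ℕ) (p : ℕ)]

private lemma revMat_revMat {l : ℕ} : revMat k l * revMat k l = (1 : Matrix (Fin (l + 1)) (Fin (l + 1)) k) := by
  ext p q
  rw [Matrix.mul_apply]
  have hp : (p : ℕ) ≤ l := by omega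
  have hq : (q : ℕ) ≤ l := by omega
  rw [Finset.sum_eq_single (⟨l - (p : ℕ), by omega⟩ : Fin (l + 1))]
  · simp only [revMat, Fin.val_mk, Matrix.one_apply]
    rcases eq_or_ne p q with hpq | hpq
    · rw [if_pos (by omega), if_pos (by subst hpq; omega), if_pos hpq, one_mul]
    · have hval : (p : ℕ) ≠ (q : ℕ) := fun hh => hpq (Fin.ext hh)
      rw [if_pos (by omega), if_neg (by omega), if_neg hpq, one_mul]
  · intro b _ hb
    simp only [revMat]
    have hcond : ¬ ((p : ℕ) + (b : ℕ) = l) := by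
      intro hc
      exact hb (Fin.ext (by simp only [Fin.val_mk]; omega))
    rw [if_neg hcond, zero_mul]
  · intro habs; exact absurd (Finset.mem_univ _) habs

private lemma surj_of_transpose_inj {m n : ℕ} (M : Matrix (Fin n) (Fin m) k)
    (h : Function.Injective Mᵀ.mulVecLin) : Function.Surjective M.mulVecLin := by
  have h1 : Mᵀ.rank = n := by
    have : Mᵀ.rank = Module.finrank k (LinearMap.range Mᵀ.mulVecLin) := rfl
    rw [this, LinearMap.finrank_range_of_inj h, Module.finrank_fin_fun]
  have h2 : M.rank = n := by rw [← Matrix.rank_transpose]; exact h1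
  have h3 : LinearMap.range M.mulVecLin = ⊤ := by
    apply Submodule.eq_top_of_finrank_eq
    have : Module.finrank k (LinearMap.range M.mulVecLin) = M.rank := rfl
    rw [this, h2, Module.finrank_fin_fun]
  exact LinearMap.range_eq_top.mp h3

/-- `ι_{j,d,(c,n),μ} ∘ π_{i,d,(b,m),λ}` is injective if
`m ≤ l(d) < n + m` and `m < n`, and surjective if `n ≤ l(d) < m + n` and `n < m`. -/
theorem stmt10 [IsAlgClosed k]
    (Q : QuivData V Arr) (R : Set (List Arr)) (hSA : IsStringAlgebra Q R)
    (wb wc : Word Arr) (hb : IsBand Q R wb) (hc : IsBand Q R wc)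
    (lam mu : k) (hlam : lam ≠ 0) (hmu : mu ≠ 0)
    (d : SStr V Arr) (hd : IsStrV Q R d)
    (j : Fin wc.length) (hj : j ∈ subB Q d wc)
    (i : Fin wb.length) (hi : i ∈ facB Q d wb) :
    (wb.length ≤ d.1.length → d.1.length < wc.length + wb.length →
      wb.length < wc.length →
      Function.Injective (iotaBand k Q d wc mu j * piBand k Q d wb lam i).mulVecLin) ∧
    (wc.length ≤ d.1.length → d.1.length < wb.length + wc.length →
      wc.length < wb.length →
      Function.Surjective (iotaBand k Q d wc mu j * piBand k Q d wb lam i).mulVecLin) := by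
  have hm : 0 < wb.length := List.length_pos_iff.mpr hb.1.1
  have hn : 0 < wc.length := List.length_pos_iff.mpr hc.1.1
  constructor
  · intro h1 h2 h3
    obtain ⟨F, hFor, hM⟩ : ∃ F, (F = facMapB k (i : ℕ) d.1.length wb.length lam ∨
        F = revMat k d.1.length * facMapB k (i : ℕ) d.1.length wb.length lam) ∧
        iotaBand k Q d wc mu j * piBand k Q d wb lam i =
          subMapB k (j : ℕ) d.1.length wc.length mu * F := by
      unfold iotaBand piBand
      split_ifs with hio hpi hpi
      · exact ⟨_, Or.inl rfl, rfl⟩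
      · exact ⟨_, Or.inr rfl, rfl⟩
      · exact ⟨_, Or.inr rfl, by rw [Matrix.mul_assoc]⟩
      · refine ⟨_, Or.inl rfl, ?_⟩
        rw [Matrix.mul_assoc,
          ← Matrix.mul_assoc (revMat k d.1.length) (revMat k d.1.length),
          revMat_revMat, Matrix.one_mul]
    rw [hM]
    refine LinearMap.ker_eq_bot.mp (LinearMap.ker_eq_bot'.mpr ?_)
    intro v hv0
    refine core_inj d.1.length wb.length wc.length (i : ℕ) (j : ℕ) hm h1 h2 h3
      lam mu hlam hmu F hFor v ?_
    rwa [Matrix.mulVecLin_apply] at hv0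
  · intro h1 h2 h3
    apply surj_of_transpose_inj
    obtain ⟨F, hFor, hM⟩ : ∃ F, (F = facMapB k (j : ℕ) d.1.length wc.length mu⁻¹ ∨
        F = revMat k d.1.length * facMapB k (j : ℕ) d.1.length wc.length mu⁻¹) ∧
        (iotaBand k Q d wc mu j * piBand k Q d wb lam i)ᵀ =
          subMapB k (i : ℕ) d.1.length wb.length lam⁻¹ * F := by
      unfold iotaBand piBand
      split_ifs with hio hpi hpi
      · exact ⟨_, Or.inl rfl, by
          rw [Matrix.transpose_mul, facMapB_transpose, subMapB_transpose]⟩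
      · exact ⟨_, Or.inr rfl, by
          rw [Matrix.transpose_mul, Matrix.transpose_mul, facMapB_transpose, revMat_transpose,
            subMapB_transpose, Matrix.mul_assoc]⟩
      · exact ⟨_, Or.inr rfl, by
          rw [Matrix.transpose_mul, Matrix.transpose_mul, facMapB_transpose, revMat_transpose,
            subMapB_transpose]⟩
      · refine ⟨_, Or.inl rfl, ?_⟩
        rw [Matrix.transpose_mul, Matrix.transpose_mul, Matrix.transpose_mul,
          facMapB_transpose, revMat_transpose, subMapB_transpose]
        rw [Matrix.mul_assoc,
          ← Matrix.mul_assoc (revMat k d.1.length) (revMat k d.1.length),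
          revMat_revMat, Matrix.one_mul]
    rw [hM]
    refine LinearMap.ker_eq_bot.mp (LinearMap.ker_eq_bot'.mpr ?_)
    intro v hv0
    refine core_inj d.1.length wc.length wb.length (j : ℕ) (i : ℕ) hn h1 h2 h3
      mu⁻¹ lam⁻¹ (inv_ne_zero hmu) (inv_ne_zero hlam) F hFor v ?_
    rwa [Matrix.mulVecLin_apply] at hv0

end SA
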